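/- arXiv:1508.00196 — 3 statements merged into one kernel-verified Lean document; each statement's English description precedes it below -/
import Mathlib

section
/- (MacLaurin inequality) For λ ∈ Γ_k and 1 ≤ l ≤ k, one has (σ_k(λ)/C(n,k))^{1/k} ≤ (σ_l(λ)/C(n,l))^{1/l}, where C(n,j) is the binomial coefficient. -/
open Finset

/-- The k-th elementary symmetric polynomial of λ ∈ ℝⁿ. -/
noncomputable def esymm (n k : ℕ) (lam : Fin n → ℝ) : ℝ :=
  ∑ s ∈ Finset.powersetCard k (Finset.univ : Finset (Fin n)), ∏ i ∈ s, lam i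

/-- The Garding cone Γ_k. -/
def GammaCone (n k : ℕ) : Set (Fin n → ℝ) :=
  {lam | ∀ j, 1 ≤ j → j ≤ k → 0 < esymm n j lam}

/-!
Write `E_j = σ_j / C(N, j)` for the normalized elementary symmetric means of `N` real numbers.
The heart of the matter is Newton's inequality `E_j E_{j+2} ≤ E_{j+1}²`, proved by induction on `N`.
By Rolle's theorem the derivative of `∏ (X - λᵢ)` again has only real roots, `N - 1` of them, and
comparing coefficients shows they have the same means `E_0, …, E_{N-1}`; this reduces to
`j + 2 = N`. There, if some `λᵢ = 0` then `E_N = 0`; otherwise `σ_k(λ) = σ_N(λ) σ_{N-k}(λ⁻¹)`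
turns the claim into `E_0 E_2 ≤ E_1²` for the inverses, which is Cauchy–Schwarz.

Newton's inequalities say that `log E_j` is concave on `[0, k]` (where `E_j > 0`), and `log E_0 = 0`,
so `log E_j / j` is non-increasing there: this is MacLaurin's inequality.
-/

open Polynomial

universe u

theorem Polynomial.card_roots_derivative_eq_natDegree {p : ℝ[X]}
    (hp : Multiset.card p.roots = p.natDegree) :
    Multiset.card (derivative p).roots = (derivative p).natDegree := by
  have hle := card_roots_le_derivative p
  have hge := card_roots' (derivative p)
  rw [natDegree_derivative] at hge ⊢
  omega

namespace Multiset

section CommSemiring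

variable {R : Type*} [CommSemiring R]

theorem esymm_card (s : Multiset R) : s.esymm (card s) = s.prod := by
  simp [esymm, powersetCard_self]

theorem esymm_eq_zero_of_card_lt {s : Multiset R} {k : ℕ} (h : card s < k) : s.esymm k = 0 := by
  simp [esymm, powersetCard_eq_empty _ h]

theorem esymm_zero (s : Multiset R) : s.esymm 0 = 1 := by
  simp [esymm]

theorem esymm_cons_succ (a : R) (s : Multiset R) (k : ℕ) :
    (a ::ₘ s).esymm (k + 1) = s.esymm (k + 1) + a * s.esymm k := by
  simp [esymm, powersetCard_cons, map_map, sum_map_mul_left]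

theorem esymm_one (s : Multiset R) : s.esymm 1 = s.sum := by
  induction s using Multiset.induction_on with
  | empty => exact esymm_eq_zero_of_card_lt zero_lt_one
  | cons a s ih => rw [esymm_cons_succ, ih, esymm_zero, mul_one, sum_cons, add_comm]

end CommSemiring

theorem sq_sum_eq_sum_map_sq_add_two_mul_esymm_two {R : Type*} [CommRing R] (s : Multiset R) :
    s.sum ^ 2 = (s.map (· ^ 2)).sum + 2 * s.esymm 2 := by
  induction s using Multiset.induction_on with
  | empty => simp [esymm_eq_zero_of_card_lt (s := (0 : Multiset R)) zero_lt_two]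
  | cons a s ih =>
    rw [esymm_cons_succ, esymm_one, sum_cons, map_cons, sum_cons]
    linear_combination ih

theorem esymm_eq_prod_mul_esymm_inv {K : Type u} [Field K] {s : Multiset K} (hs : (0 : K) ∉ s)
    {k : ℕ} (hk : k ≤ card s) :
    s.esymm k = s.prod * (s.map (·⁻¹)).esymm (card s - k) := by
  classical
  obtain ⟨ι, _, f, rfl⟩ : ∃ (ι : Type u) (_ : Fintype ι) (f : ι → K), univ.val.map f = s :=
    ⟨s, inferInstance, _, s.map_univ_coe⟩
  have hf : ∀ i, f i ≠ 0 := fun i hi => hs (hi ▸ mem_map_of_mem f (mem_univ i))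
  simp only [card_map, card_val, card_univ, map_map, Function.comp_def, esymm_map_val,
    Finset.prod_map_val, Finset.mul_sum] at hk ⊢
  refine Finset.sum_nbij' compl compl ?_ ?_ (fun t _ => compl_compl t) (fun t _ => compl_compl t) ?_
  · intro t ht
    simp only [mem_powersetCard_univ, card_compl] at ht ⊢
    omega
  · intro t ht
    simp only [mem_powersetCard_univ, card_compl] at ht ⊢
    omega
  · intro t _
    rw [← prod_mul_prod_compl tᶜ f, compl_compl, prod_inv_distrib, mul_right_comm,
      mul_inv_cancel₀ (prod_ne_zero_iff.2 fun i _ => hf i), one_mul]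

theorem sq_sum_le_card_mul_sum_sq (s : Multiset ℝ) : s.sum ^ 2 ≤ card s * (s.map (· ^ 2)).sum := by
  obtain ⟨ι, _, f, rfl⟩ : ∃ (ι : Type) (_ : Fintype ι) (f : ι → ℝ), univ.val.map f = s :=
    ⟨s, inferInstance, _, s.map_univ_coe⟩
  simpa [map_map, Function.comp_def, Finset.sum_map_val] using
    _root_.sq_sum_le_card_mul_sum_sq (s := univ) (f := f)

noncomputable def esymmMean (s : Multiset ℝ) (k : ℕ) : ℝ := s.esymm k / (card s).choose k

variable {s : Multiset ℝ}

@[simp]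
theorem esymmMean_zero (s : Multiset ℝ) : s.esymmMean 0 = 1 := by
  simp [esymmMean, esymm_zero]

theorem esymmMean_eq_zero_of_card_lt {k : ℕ} (h : card s < k) : s.esymmMean k = 0 := by
  rw [esymmMean, esymm_eq_zero_of_card_lt h, zero_div]

theorem esymmMean_pos {k : ℕ} (h : 0 < s.esymm k) : 0 < s.esymmMean k := by
  have hk : k ≤ card s := by
    by_contra! hk
    exact h.ne' (esymm_eq_zero_of_card_lt hk)
  exact div_pos h (by exact_mod_cast Nat.choose_pos hk)

theorem esymmMean_two_le_sq (s : Multiset ℝ) : s.esymmMean 2 ≤ s.esymmMean 1 ^ 2 := by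
  rcases lt_or_ge (card s) 2 with hs | hs
  · rw [esymmMean_eq_zero_of_card_lt hs]
    positivity
  have hN : (2 : ℝ) ≤ card s := by exact_mod_cast hs
  have hsq := sq_sum_eq_sum_map_sq_add_two_mul_esymm_two s
  have hcs := sq_sum_le_card_mul_sum_sq s
  rw [esymmMean, esymmMean, esymm_one, Nat.cast_choose_two, Nat.choose_one_right, div_pow,
    div_le_div_iff₀ (by nlinarith) (by positivity)]
  nlinarith

theorem esymmMean_eq_prod_mul_esymmMean_inv (hs : (0 : ℝ) ∉ s) {k : ℕ} (hk : k ≤ card s) :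
    s.esymmMean k = s.prod * (s.map (·⁻¹)).esymmMean (card s - k) := by
  rw [esymmMean, esymmMean, card_map, esymm_eq_prod_mul_esymm_inv hs hk, Nat.choose_symm hk,
    mul_div_assoc]

theorem esymmMean_mul_esymmMean_le_sq_of_card_eq {j : ℕ} (hs : card s = j + 2) :
    s.esymmMean j * s.esymmMean (j + 2) ≤ s.esymmMean (j + 1) ^ 2 := by
  by_cases h0 : (0 : ℝ) ∈ s
  · have htop : s.esymmMean (j + 2) = 0 := by
      rw [esymmMean, ← hs, esymm_card, prod_eq_zero h0, zero_div]
    rw [htop, mul_zero]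
    positivity
  have hinv := esymmMean_two_le_sq (s.map (·⁻¹))
  rw [esymmMean_eq_prod_mul_esymmMean_inv h0 (k := j) (by omega),
    esymmMean_eq_prod_mul_esymmMean_inv h0 (k := j + 1) (by omega),
    esymmMean_eq_prod_mul_esymmMean_inv h0 (k := j + 2) (by omega), hs,
    show j + 2 - j = 2 by omega, show j + 2 - (j + 1) = 1 by omega, Nat.sub_self,
    esymmMean_zero]
  calc s.prod * (s.map (·⁻¹)).esymmMean 2 * (s.prod * 1)
      = s.prod ^ 2 * (s.map (·⁻¹)).esymmMean 2 := by ring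
    _ ≤ s.prod ^ 2 * (s.map (·⁻¹)).esymmMean 1 ^ 2 := by gcongr
    _ = (s.prod * (s.map (·⁻¹)).esymmMean 1) ^ 2 := by ring

theorem card_roots_derivative_prod_X_sub_C (s : Multiset ℝ) :
    card (derivative (s.map (X - C ·)).prod).roots = card s - 1 := by
  have hroots : card (s.map (X - C ·)).prod.roots = (s.map (X - C ·)).prod.natDegree := by
    rw [roots_multiset_prod_X_sub_C, natDegree_multiset_prod_X_sub_C_eq_card]
  rw [card_roots_derivative_eq_natDegree hroots, natDegree_derivative,
    natDegree_multiset_prod_X_sub_C_eq_card]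

theorem esymm_roots_derivative_prod_X_sub_C {n : ℕ} (hs : card s = n + 1) {m : ℕ} (hm : m ≤ n) :
    ((n : ℝ) + 1) * (derivative (s.map (X - C ·)).prod).roots.esymm m =
      ((n : ℝ) + 1 - m) * s.esymm m := by
  set p := (s.map (X - C ·)).prod
  have hp : p.natDegree = n + 1 := by rw [natDegree_multiset_prod_X_sub_C_eq_card, hs]
  have hcoeff : ∀ i ≤ n + 1, p.coeff i = (-1) ^ (n + 1 - i) * s.esymm (n + 1 - i) := fun i hi => by
    rw [prod_X_sub_C_coeff s (hs ▸ hi), hs]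
  have hdeg : (derivative p).natDegree = n := by rw [natDegree_derivative, hp, Nat.add_sub_cancel]
  have hlead : (derivative p).leadingCoeff = n + 1 := by
    rw [leadingCoeff, hdeg, coeff_derivative, hcoeff _ le_rfl, Nat.sub_self]
    simp [esymm_zero]
  have hroots : card (derivative p).roots = (derivative p).natDegree := by
    rw [card_roots_derivative_prod_X_sub_C, hdeg, hs, Nat.add_sub_cancel]
  have hvieta := coeff_eq_esymm_roots_of_card hroots (k := n - m) (by omega)
  rw [coeff_derivative, hcoeff _ (by omega), hdeg, hlead, show n + 1 - (n - m + 1) = m by omega,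
    show n - (n - m) = m by omega] at hvieta
  have hsign : ((-1 : ℝ) ^ m) ≠ 0 := by positivity
  apply mul_left_cancel₀ hsign
  rw [Nat.cast_sub hm] at hvieta
  linear_combination -hvieta

theorem exists_card_eq_esymmMean_eq {n : ℕ} (hs : card s = n + 1) :
    ∃ t : Multiset ℝ, card t = n ∧ ∀ m ≤ n, t.esymmMean m = s.esymmMean m := by
  refine ⟨_, by rw [card_roots_derivative_prod_X_sub_C, hs, Nat.add_sub_cancel], fun m hm => ?_⟩
  have hchoose : ((n.choose m : ℕ) : ℝ) * (n + 1) = ((n + 1).choose m : ℕ) * (n + 1 - m) := by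
    rw [← Nat.cast_add_one, ← Nat.cast_sub (by omega), ← Nat.cast_mul, ← Nat.cast_mul,
      Nat.choose_mul_succ_eq]
  have hpos : (0 : ℝ) < n.choose m := by exact_mod_cast Nat.choose_pos hm
  rw [esymmMean, esymmMean, card_roots_derivative_prod_X_sub_C, hs, Nat.add_sub_cancel,
    div_eq_div_iff hpos.ne' (by exact_mod_cast (Nat.choose_pos (by omega)).ne')]
  have hn : (0 : ℝ) < n + 1 := by positivity
  apply mul_left_cancel₀ hn.ne'
  linear_combination (((n + 1).choose m : ℕ) : ℝ) * esymm_roots_derivative_prod_X_sub_C hs hm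
    - s.esymm m * hchoose

theorem esymmMean_mul_esymmMean_le_sq (s : Multiset ℝ) (j : ℕ) :
    s.esymmMean j * s.esymmMean (j + 2) ≤ s.esymmMean (j + 1) ^ 2 := by
  induction hn : card s using Nat.strong_induction_on generalizing s with
  | _ n ih =>
    rcases lt_trichotomy n (j + 2) with hlt | heq | hgt
    · rw [esymmMean_eq_zero_of_card_lt (k := j + 2) (by omega), mul_zero]
      positivity
    · exact esymmMean_mul_esymmMean_le_sq_of_card_eq (hn.trans heq)
    · obtain ⟨m, rfl⟩ : ∃ m, n = m + 1 := ⟨n - 1, by omega⟩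
      obtain ⟨t, ht, hmean⟩ := exists_card_eq_esymmMean_eq hn
      rw [← hmean j (by omega), ← hmean (j + 1) (by omega), ← hmean (j + 2) (by omega)]
      exact ih m (by omega) t ht

end Multiset

theorem div_le_div_of_concave_of_map_zero {a : ℕ → ℝ} {k : ℕ} (h0 : a 0 = 0)
    (hconc : ∀ j, j + 2 ≤ k → a j + a (j + 2) ≤ 2 * a (j + 1))
    {l m : ℕ} (hl : 1 ≤ l) (hlm : l ≤ m) (hmk : m ≤ k) : a m / m ≤ a l / l := by
  have hstep : ∀ j, j + 1 ≤ k → j * a (j + 1) ≤ (j + 1) * a j := by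
    intro j
    induction j with
    | zero => simp [h0]
    | succ j ih =>
      intro hj
      have := mul_le_mul_of_nonneg_left (hconc j (by omega)) (by positivity : (0 : ℝ) ≤ j + 1)
      push_cast
      linarith [ih (by omega)]
  induction m, hlm using Nat.le_induction with
  | base => rfl
  | succ m hlm ih =>
    refine le_trans ?_ (ih (by omega))
    have hm : (0 : ℝ) < m := by exact_mod_cast (by omega : 0 < m)
    rw [div_le_div_iff₀ (by positivity) hm, mul_comm, Nat.cast_add_one, mul_comm (a m)]
    exact hstep m hmk

theorem rpow_one_div_le_of_mul_le_sq {p : ℕ → ℝ} {k : ℕ} (h0 : p 0 = 1) (hpos : ∀ j ≤ k, 0 < p j)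
    (hnewton : ∀ j, p j * p (j + 2) ≤ p (j + 1) ^ 2) {l : ℕ} (hl : 1 ≤ l) (hlk : l ≤ k) :
    p k ^ ((1 : ℝ) / k) ≤ p l ^ ((1 : ℝ) / l) := by
  have hconc : ∀ j, j + 2 ≤ k → Real.log (p j) + Real.log (p (j + 2)) ≤
      2 * Real.log (p (j + 1)) := fun j hj => by
    have hj1 := (hpos (j + 1) (by omega)).ne'
    rw [← Real.log_mul (hpos j (by omega)).ne' (hpos (j + 2) hj).ne', two_mul,
      ← Real.log_mul hj1 hj1, ← sq]
    exact Real.log_le_log (mul_pos (hpos j (by omega)) (hpos (j + 2) hj)) (hnewton j)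
  have hlog := div_le_div_of_concave_of_map_zero (a := fun j => Real.log (p j))
    (by simp [h0]) hconc hl hlk le_rfl
  rw [Real.rpow_def_of_pos (hpos k le_rfl), Real.rpow_def_of_pos (hpos l hlk)]
  exact Real.exp_le_exp.2 (by simpa only [mul_one_div] using hlog)

theorem maclaurin_general (n k l : ℕ) (hl : 1 ≤ l) (hlk : l ≤ k)
    (lam : Fin n → ℝ) (hlam : lam ∈ GammaCone n k) :
    (esymm n k lam / (n.choose k : ℝ)) ^ ((1 : ℝ) / k) ≤
      (esymm n l lam / (n.choose l : ℝ)) ^ ((1 : ℝ) / l) := by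
  set s := univ.val.map lam
  have hesymm : ∀ j, esymm n j lam = s.esymm j := fun j => by rw [esymm, ← esymm_map_val]
  have hmean : ∀ j, esymm n j lam / n.choose j = s.esymmMean j := fun j => by
    rw [hesymm, Multiset.esymmMean, Multiset.card_map, card_val, card_univ, Fintype.card_fin]
  have hpos : ∀ j ≤ k, 0 < s.esymmMean j := fun j hj => by
    rcases j.eq_zero_or_pos with rfl | hj0
    · simp
    · exact Multiset.esymmMean_pos (hesymm j ▸ hlam j hj0 hj)
  rw [hmean, hmean]
  exact rpow_one_div_le_of_mul_le_sq s.esymmMean_zero hpos s.esymmMean_mul_esymmMean_le_sq hl hlk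

/-- MacLaurin inequality. -/
theorem maclaurin (n k l : ℕ) (hl : 1 ≤ l) (hlk : l ≤ k) (hkn : k ≤ n)
    (lam : Fin n → ℝ) (hlam : lam ∈ GammaCone n k) :
    (esymm n k lam / (n.choose k : ℝ)) ^ ((1 : ℝ) / k) ≤
      (esymm n l lam / (n.choose l : ℝ)) ^ ((1 : ℝ) / l) :=
  maclaurin_general n k l hl hlk lam hlam
end

section
/- For λ ∈ Γ_k, the sum of partial derivatives of σ_k^{1/k} satisfies Σ_{i=1}^n ∂(σ_k^{1/k})/∂λ_i (λ) ≥ C(n,k)^{1/k}. -/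
/-!
Since `∑ i, σ_{k-1}(λ|i) = (n-k+1) σ_{k-1}(λ)` and `(n-k+1) C(n,k-1) = k C(n,k)`, the sum equals
`C(n,k) E_{k-1} σ_k^{1/k-1}` with `E_j = σ_j / C(n,j)`, and the bound is equivalent to Maclaurin's
inequality `E_k^{k-1} ≤ E_{k-1}^k`. On `Γ_k` this follows by induction from Newton's inequalities
`E_j E_{j+2} ≤ E_{j+1}^2`. These hold for every real `λ`: the polynomial `∏ (X + λ_i)` equals
`∑ C(n,j) E_j X^{n-j}`, polynomials of this shape stay of this shape under differentiation and
reflection, both of which preserve real-rootedness (Rolle), and differentiating and reflecting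
down to degree two leaves `E_{j+2} X^2 + 2 E_{j+1} X + E_j`, whose discriminant is nonnegative.
-/

open Finset

open Polynomial

namespace Polynomial

theorem Splits.derivative_of_real {f : ℝ[X]} (hf : f.Splits) : (derivative f).Splits := by
  rw [splits_iff_card_roots] at hf ⊢
  have := f.card_roots_le_derivative
  have := f.natDegree_derivative_le
  have := (derivative f).card_roots'
  omega

theorem Splits.reverse {K : Type*} [Field K] {f : K[X]} (hf : f.Splits) : f.reverse.Splits := by
  induction hf using Submonoid.closure_induction with
  | mem g hg =>
    refine Splits.of_natDegree_le_one ((reverse_natDegree_le g).trans ?_)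
    rcases hg with ⟨a, rfl⟩ | ⟨a, rfl⟩ <;> simp
  | one => rw [← C_1, reverse_C]; exact Splits.C 1
  | mul f g _ _ hf hg => rw [reverse_mul_of_domain]; exact hf.mul hg

theorem Splits.reflect {K : Type*} [Field K] {f : K[X]} (hf : f.Splits) {N : ℕ}
    (hN : f.natDegree ≤ N) : (f.reflect N).Splits := by
  have h := reflect_mul f 1 le_rfl (natDegree_one.trans_le (Nat.zero_le (N - f.natDegree)))
  rw [mul_one, Nat.add_sub_cancel' hN, reflect_one] at h
  rw [h]
  exact hf.reverse.mul (Splits.X_pow _)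

theorem Splits.discrim_nonneg {K : Type*} [Field K] [LinearOrder K] [IsStrictOrderedRing K]
    {a b c : K} (h : (C a * X ^ 2 + C b * X + C c).Splits) : 0 ≤ discrim a b c := by
  rcases eq_or_ne a 0 with rfl | ha
  · simpa [discrim] using sq_nonneg b
  have hdeg : (C a * X ^ 2 + C b * X + C c).degree ≠ 0 := by
    rw [degree_quadratic ha]; decide
  obtain ⟨x, hx⟩ := h.exists_eval_eq_zero hdeg
  rw [discrim_eq_sq_of_quadratic_eq_zero (x := x) (by simpa [sq] using hx)]
  exact sq_nonneg _

noncomputable def binomPoly {R : Type*} [CommSemiring R] (d : ℕ) (e : ℕ → R) : R[X] :=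
  ∑ j ∈ range (d + 1), C (d.choose j * e j) * X ^ (d - j)

section binomPoly

variable {R : Type*} [CommSemiring R]

theorem natDegree_binomPoly_le (d : ℕ) (e : ℕ → R) : (binomPoly d e).natDegree ≤ d :=
  natDegree_sum_le_of_forall_le _ _ fun j _ =>
    (natDegree_C_mul_X_pow_le _ _).trans (Nat.sub_le d j)

theorem derivative_binomPoly (d : ℕ) (e : ℕ → R) :
    derivative (binomPoly (d + 1) e) = C ((d : R) + 1) * binomPoly d e := by
  rw [binomPoly, sum_range_succ, Nat.sub_self, pow_zero, mul_one, derivative_add, derivative_C,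
    add_zero, derivative_sum, binomPoly, mul_sum]
  refine sum_congr rfl fun j hj => ?_
  have hjd : j ≤ d := Nat.lt_succ_iff.mp (mem_range.mp hj)
  rw [derivative_C_mul_X_pow, show d + 1 - j - 1 = d - j by omega, ← mul_assoc, ← C_mul]
  congr 2
  calc ((d + 1).choose j : R) * e j * ((d + 1 - j : ℕ) : R)
      = (((d + 1).choose j * (d + 1 - j) : ℕ) : R) * e j := by push_cast; ring
    _ = ((d.choose j * (d + 1) : ℕ) : R) * e j := by rw [Nat.choose_mul_succ_eq]
    _ = ((d : R) + 1) * (d.choose j * e j) := by push_cast; ring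

theorem reflect_sum {ι : Type*} (s : Finset ι) (f : ι → R[X]) (N : ℕ) :
    reflect N (∑ i ∈ s, f i) = ∑ i ∈ s, reflect N (f i) :=
  map_sum (⟨⟨reflect N, reflect_zero⟩, fun f g => reflect_add f g N⟩ : R[X] →+ R[X]) f s

theorem reflect_binomPoly (d : ℕ) (e : ℕ → R) :
    reflect d (binomPoly d e) = binomPoly d (fun j => e (d - j)) := by
  rw [binomPoly, reflect_sum, binomPoly, ← sum_range_reflect]
  refine sum_congr rfl fun j hj => ?_
  have hjd : j ≤ d := Nat.lt_succ_iff.mp (mem_range.mp hj)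
  rw [reflect_C_mul_X_pow, Nat.add_sub_cancel, Nat.sub_sub_self hjd, revAt_le hjd,
    Nat.choose_symm hjd]

theorem binomPoly_two (e : ℕ → R) :
    binomPoly 2 e = C (e 0) * X ^ 2 + C (2 * e 1) * X + C (e 2) := by
  simp [binomPoly, sum_range_succ, C_ofNat]

end binomPoly

theorem Splits.binomPoly_of_add {e : ℕ → ℝ} {d m : ℕ} (h : (binomPoly (d + m) e).Splits) :
    (binomPoly d e).Splits := by
  induction m with
  | zero => exact h
  | succ m ih =>
    refine ih ?_
    have h' := h.derivative_of_real
    rw [← add_assoc, derivative_binomPoly] at h'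
    exact (splits_mul_iff_right (C_ne_zero.mpr (by positivity)) (Splits.C _)).mp h'

theorem Splits.newton_binomPoly {e : ℕ → ℝ} {d i : ℕ} (h : (binomPoly d e).Splits)
    (hi : i + 2 ≤ d) : e i * e (i + 2) ≤ e (i + 1) ^ 2 := by
  obtain ⟨m, rfl⟩ := Nat.exists_eq_add_of_le hi
  have hrefl := h.binomPoly_of_add.reflect (natDegree_binomPoly_le _ _)
  rw [reflect_binomPoly, add_comm i 2] at hrefl
  have hquad := hrefl.binomPoly_of_add (d := 2)
  rw [binomPoly_two] at hquad
  have hdisc := hquad.discrim_nonneg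
  simp only [discrim, show 2 + i - 0 = i + 2 by omega, show 2 + i - 1 = i + 1 by omega,
    show 2 + i - 2 = i by omega] at hdisc
  linarith

end Polynomial

theorem Multiset.prod_X_add_C_eq_binomPoly {K : Type*} [Field K] [CharZero K] (s : Multiset K) :
    (s.map fun r => X + C r).prod =
      binomPoly (card s) (fun j => s.esymm j / (card s).choose j) := by
  rw [prod_X_add_C_eq_sum_esymm, binomPoly]
  refine sum_congr rfl fun j hj => ?_
  rw [mul_div_cancel₀]
  exact_mod_cast (Nat.choose_pos (Nat.lt_succ_iff.mp (mem_range.mp hj))).ne'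

theorem Multiset.esymm_div_choose_mul_le_sq (s : Multiset ℝ) {i : ℕ} (hi : i + 2 ≤ card s) :
    s.esymm i / (card s).choose i * (s.esymm (i + 2) / (card s).choose (i + 2)) ≤
      (s.esymm (i + 1) / (card s).choose (i + 1)) ^ 2 := by
  have hs : (s.map fun r => X + C r).prod.Splits := Splits.multisetProd (by simp [Splits.X_add_C])
  rw [prod_X_add_C_eq_binomPoly] at hs
  exact hs.newton_binomPoly hi

theorem pow_le_pow_succ_of_logConcave {a : ℕ → ℝ} {N : ℕ} (h0 : 1 ≤ a 0)
    (hpos : ∀ j ≤ N, 0 < a j) (hlc : ∀ j, j + 2 ≤ N → a j * a (j + 2) ≤ a (j + 1) ^ 2) :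
    ∀ j, j + 1 ≤ N → a (j + 1) ^ j ≤ a j ^ (j + 1) := by
  intro j
  induction j with
  | zero => simpa using fun _ => h0
  | succ j ih =>
    intro hj
    have ha := hpos j (by omega)
    have hb := hpos (j + 1) (by omega)
    have hc := hpos (j + 2) (by omega)
    refine le_of_mul_le_mul_right ?_ (pow_pos ha (j + 1))
    calc a (j + 2) ^ (j + 1) * a j ^ (j + 1)
        = (a j * a (j + 2)) ^ (j + 1) := by ring
      _ ≤ (a (j + 1) ^ 2) ^ (j + 1) := pow_le_pow_left₀ (by positivity) (hlc j hj) _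
      _ = a (j + 1) ^ (j + 2) * a (j + 1) ^ j := by ring
      _ ≤ a (j + 1) ^ (j + 2) * a j ^ (j + 1) := by gcongr; exact ih (by omega)

theorem esymm_eq_multiset_esymm (n k : ℕ) (lam : Fin n → ℝ) :
    esymm n k lam = (univ.val.map lam).esymm k :=
  (Finset.esymm_map_val lam univ k).symm

theorem esymm_zero (n : ℕ) (lam : Fin n → ℝ) : esymm n 0 lam = 1 := by
  simp [esymm]

theorem esymm_pos_of_mem_GammaCone {n k : ℕ} {lam : Fin n → ℝ} (hlam : lam ∈ GammaCone n k)
    {j : ℕ} (hj : j ≤ k) : 0 < esymm n j lam := by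
  rcases Nat.eq_zero_or_pos j with rfl | hj0
  · simp [esymm_zero]
  · exact hlam j hj0 hj

theorem esymm_div_choose_pow_le {n l : ℕ} (hln : l + 1 ≤ n) {lam : Fin n → ℝ}
    (hlam : lam ∈ GammaCone n (l + 1)) :
    (esymm n (l + 1) lam / n.choose (l + 1)) ^ l ≤ (esymm n l lam / n.choose l) ^ (l + 1) := by
  refine pow_le_pow_succ_of_logConcave (a := fun j => esymm n j lam / n.choose j) (N := l + 1)
    (by simp [esymm_zero]) (fun j hj => ?_) (fun j hj => ?_) l le_rfl
  · have hchoose : (0 : ℝ) < n.choose j := by exact_mod_cast Nat.choose_pos (by omega)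
    exact div_pos (esymm_pos_of_mem_GammaCone hlam hj) hchoose
  · simpa [esymm_eq_multiset_esymm] using
      (univ.val.map lam).esymm_div_choose_mul_le_sq (i := j) (by simp; omega)

theorem sum_esymm_update_zero (n k : ℕ) (lam : Fin n → ℝ) :
    ∑ i, esymm n k (Function.update lam i 0) = (n - k : ℕ) * esymm n k lam := by
  simp only [esymm, mul_sum]
  rw [sum_comm]
  refine sum_congr rfl fun s hs => ?_
  rw [← sum_add_sum_compl s, sum_eq_zero fun i hi => by rw [prod_update_of_mem hi, zero_mul],
    sum_congr rfl fun i hi => prod_update_of_notMem (mem_compl.mp hi) lam 0, sum_const,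
    card_compl, Fintype.card_fin, (mem_powersetCard.mp hs).2, zero_add, nsmul_eq_mul]

theorem rpow_one_div_succ_le_mul_rpow {C E σ : ℝ} {l : ℕ} (hC : 0 < C) (hE : 0 ≤ E)
    (hσ : 0 < σ) (h : (σ / C) ^ l ≤ E ^ (l + 1)) :
    C ^ ((1 : ℝ) / (l + 1)) ≤ C * E * σ ^ ((1 : ℝ) / (l + 1) - 1) := by
  have hexp : ((1 : ℝ) / (l + 1) - 1) * (l + 1 : ℕ) = -l := by
    push_cast; field_simp; ring
  have hpow : (σ ^ ((1 : ℝ) / (l + 1) - 1)) ^ (l + 1) = (σ ^ l)⁻¹ := by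
    rw [← Real.rpow_mul_natCast hσ.le, hexp, Real.rpow_neg hσ.le, Real.rpow_natCast]
  have hroot : (C ^ ((1 : ℝ) / (l + 1))) ^ (l + 1) = C := by
    rw [one_div, ← Nat.cast_succ, Real.rpow_inv_natCast_pow hC.le (Nat.succ_ne_zero l)]
  refine le_of_pow_le_pow_left₀ (Nat.succ_ne_zero l) (by positivity) ?_
  rw [hroot, mul_pow, mul_pow, hpow]
  calc C = C ^ (l + 1) * (σ / C) ^ l * (σ ^ l)⁻¹ := by rw [div_pow]; field_simp; ring
    _ ≤ C ^ (l + 1) * E ^ (l + 1) * (σ ^ l)⁻¹ := by gcongr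

/-- Σ_i ∂(σ_k^{1/k})/∂λ_i ≥ C(n,k)^{1/k}, where
∂(σ_k^{1/k})/∂λ_i = (1/k) σ_k^{1/k-1} σ_{k-1}(λ|i). -/
theorem sum_derivatives_lower_bound (n k : ℕ) (hk1 : 1 ≤ k) (hkn : k ≤ n)
    (lam : Fin n → ℝ) (hlam : lam ∈ GammaCone n k) :
    (n.choose k : ℝ) ^ ((1 : ℝ) / k) ≤
      ∑ i : Fin n, (1 / (k : ℝ)) * esymm n k lam ^ ((1 : ℝ) / k - 1) *
        esymm n (k - 1) (Function.update lam i 0) := by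
  obtain ⟨l, rfl⟩ := Nat.exists_eq_add_of_le' hk1
  have hσ : 0 < esymm n (l + 1) lam := hlam (l + 1) le_add_self le_rfl
  have hchoose : (0 : ℝ) < n.choose (l + 1) := by exact_mod_cast Nat.choose_pos hkn
  have hmean : 0 ≤ esymm n l lam / n.choose l := by
    have := esymm_pos_of_mem_GammaCone hlam (Nat.le_succ l)
    positivity
  have hchoose' : (0 : ℝ) < n.choose l := by exact_mod_cast Nat.choose_pos (by omega)
  have hpascal : (n.choose (l + 1) : ℝ) * (l + 1) = n.choose l * (n - l : ℕ) := by
    exact_mod_cast Nat.choose_succ_right_eq n l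
  have hbound := rpow_one_div_succ_le_mul_rpow hchoose hmean hσ (esymm_div_choose_pow_le hkn hlam)
  rw [Nat.add_sub_cancel, ← mul_sum, sum_esymm_update_zero]
  push_cast
  convert hbound using 1
  generalize esymm n (l + 1) lam ^ ((1 : ℝ) / (l + 1) - 1) = P
  field_simp
  linear_combination -P * esymm n l lam * hpascal
end

section
/- Let λ ∈ Γ_k (2 ≤ k ≤ n), with λ_1 ≥ λ_2 ≥ ... ≥ λ_n and λ_n < 0. Suppose σ_{k-1}(λ|1) ≤ δ·(−λ_n)·σ_{k-2}(λ|1,n) for some δ > 0. Then k σ_k(λ|1) ≤ −n δ λ_n λ_2 σ_{k-2}(λ|1,n) − λ_n² σ_{k-2}(λ|1,n). -/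
open Finset

section Aux
set_option linter.unnecessarySimpa false



open Polynomial

/-- The polynomial ∏ (X + f i). -/
noncomputable def pfn {m : ℕ} (f : Fin m → ℝ) : ℝ[X] := ∏ i, (X + C (f i))

lemma pfn_monic {m : ℕ} (f : Fin m → ℝ) : (pfn f).Monic :=
  monic_prod_of_monic _ _ fun i _ => monic_X_add_C (f i)

lemma pfn_natDegree {m : ℕ} (f : Fin m → ℝ) : (pfn f).natDegree = m := by
  rw [pfn, natDegree_prod_of_monic _ _ fun i _ => monic_X_add_C (f i)]
  simp [natDegree_X_add_C]

lemma esymm_eq_coeff {m j : ℕ} (hj : j ≤ m) (f : Fin m → ℝ) :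
    esymm m j f = (pfn f).coeff (m - j) := by
  rw [pfn, Finset.prod_X_add_C_coeff univ f (by simpa using Nat.sub_le m j)]
  rw [esymm]
  congr 1
  simp [Nat.sub_sub_self hj]

lemma coeff_pfn {m s : ℕ} (hs : s ≤ m) (f : Fin m → ℝ) :
    (pfn f).coeff s = esymm m (m - s) f := by
  rw [esymm_eq_coeff (Nat.sub_le m s) f, Nat.sub_sub_self hs]

lemma esymm_zero_eq (m : ℕ) (f : Fin m → ℝ) : esymm m 0 f = 1 := by
  simp [esymm]

lemma esymm_top (m : ℕ) (f : Fin m → ℝ) : esymm m m f = ∏ i, f i := by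
  rw [esymm]
  rw [show (univ : Finset (Fin m)).powersetCard m = {univ} by
    simpa using Finset.powersetCard_self (univ : Finset (Fin m))]
  simp

lemma pfn_roots_card {m : ℕ} (f : Fin m → ℝ) : (pfn f).roots.card = m := by
  have h : (pfn f).roots = (univ : Finset (Fin m)).val.bind fun i => (X + C (f i)).roots := by
    rw [pfn, Polynomial.roots_prod]
    exact (pfn_monic f).ne_zero
  rw [h]
  rw [Multiset.card_bind]
  have : ∀ i : Fin m, (X + C (f i)).roots = {-f i} := by
    intro i
    rw [show X + C (f i) = X - C (-f i) by push_cast [map_neg]; ring, roots_X_sub_C]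
  simp [this]


/-- Q_i = ∏_{x ≠ i} (X + C (f x)) -/
noncomputable def qfn {m : ℕ} (f : Fin m → ℝ) (i : Fin m) : ℝ[X] :=
  ∏ x ∈ univ.erase i, (X + C (f x))

lemma pfn_eq_qfn {m : ℕ} (f : Fin m → ℝ) (i : Fin m) :
    pfn f = (X + C (f i)) * qfn f i :=
  (Finset.mul_prod_erase univ _ (mem_univ i)).symm

lemma pfn_update {m : ℕ} (f : Fin m → ℝ) (i : Fin m) :
    pfn (Function.update f i 0) = X * qfn f i := by
  rw [pfn_eq_qfn (Function.update f i 0) i, Function.update_self, map_zero, add_zero]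
  congr 1
  exact Finset.prod_congr rfl fun x hx => by
    rw [Function.update_of_ne (Finset.mem_erase.1 hx).1]

lemma esymm_update {m j : ℕ} (hj : j ≤ m) (f : Fin m → ℝ) (i : Fin m) :
    esymm m j (Function.update f i 0) = (X * qfn f i).coeff (m - j) := by
  rw [esymm_eq_coeff hj, pfn_update]

/-- Recursion: σ_j(f) = σ_j(f|i) + f i · σ_{j-1}(f|i), for 1 ≤ j ≤ m. -/
lemma esymm_rec {m j : ℕ} (h1 : 1 ≤ j) (hj : j ≤ m) (f : Fin m → ℝ) (i : Fin m) :
    esymm m j f = esymm m j (Function.update f i 0)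
      + f i * esymm m (j - 1) (Function.update f i 0) := by
  rw [esymm_eq_coeff hj, esymm_update hj, esymm_update (by omega),
    pfn_eq_qfn f i, add_mul, coeff_add, coeff_C_mul]
  congr 2
  have : m - (j - 1) = (m - j) + 1 := by omega
  rw [this, coeff_X_mul]

/-- Σ_i σ_{j+1}(f|i) = (m - (j+1)) σ_{j+1}(f) for j+1 ≤ m. -/
lemma sum_esymm_update {m j : ℕ} (hj : j + 1 ≤ m) (f : Fin m → ℝ) :
    ∑ i, esymm m (j + 1) (Function.update f i 0)
      = ((m : ℝ) - (j + 1)) * esymm m (j + 1) f := by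
  rcases eq_or_lt_of_le hj with heq | hlt
  · have : ∀ i : Fin m, esymm m (j + 1) (Function.update f i 0) = 0 := by
      intro i
      have hm : j + 1 = m := heq
      subst hm
      rw [esymm_top]
      exact Finset.prod_eq_zero (mem_univ i) (Function.update_self i 0 f)
    rw [Finset.sum_congr rfl fun i _ => this i]
    have hm : j + 1 = m := heq
    subst hm
    simp
  · -- j + 1 < m
    have hd : derivative (pfn f) = ∑ i, qfn f i := by
      rw [pfn, Finset.prod_eq_multiset_prod, derivative_prod, Finset.sum_eq_multiset_sum]
      congr 1
      refine Multiset.map_congr rfl fun i hi => ?_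
      have : derivative (X + C (f i)) = 1 := by simp
      rw [this, mul_one, qfn, Finset.prod_eq_multiset_prod, Finset.erase_val]
    have key : ∀ i : Fin m, esymm m (j + 1) (Function.update f i 0)
        = (qfn f i).coeff (m - j - 2) := by
      intro i
      rw [esymm_update (le_of_lt hlt)]
      have : m - (j + 1) = (m - j - 2) + 1 := by omega
      rw [this, coeff_X_mul]
    rw [Finset.sum_congr rfl fun i _ => key i]
    have := congrArg (fun p => Polynomial.coeff p (m - j - 2)) hd
    simp only [finset_sum_coeff] at this
    rw [← this, coeff_derivative, coeff_pfn (by omega) f]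
    have h1 : m - (m - j - 2 + 1) = j + 1 := by omega
    rw [h1]
    have : ((m : ℝ) - j - 2 + 1) = ((m : ℝ) - (j+1)) := by ring
    have hc : ((m - j - 2 : ℕ) : ℝ) = (m : ℝ) - j - 2 := by
      have h2 : m - j - 2 = m - (j + 2) := by omega
      rw [h2, Nat.cast_sub (by omega : j + 2 ≤ m)]
      push_cast; ring
    rw [hc]
    ring

/-- k-fold counting: Σ_i f i σ_j(f|i) = (j+1) σ_{j+1}(f). -/
lemma sum_mul_esymm_update {m j : ℕ} (hj : j + 1 ≤ m) (f : Fin m → ℝ) :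
    ∑ i, f i * esymm m j (Function.update f i 0) = ((j : ℝ) + 1) * esymm m (j + 1) f := by
  have h : ∀ i : Fin m, f i * esymm m j (Function.update f i 0)
      = esymm m (j + 1) f - esymm m (j + 1) (Function.update f i 0) := by
    intro i
    have := esymm_rec (by omega) hj f i
    simp only [Nat.add_sub_cancel] at this
    linarith
  rw [Finset.sum_congr rfl fun i _ => h i, Finset.sum_sub_distrib, sum_esymm_update hj]
  simp only [Finset.sum_const, card_univ, Fintype.card_fin, nsmul_eq_mul]
  ring

lemma esymm_one_eq {m : ℕ} (hm : 1 ≤ m) (f : Fin m → ℝ) : esymm m 1 f = ∑ i, f i := by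
  have := sum_mul_esymm_update (by omega : 0 + 1 ≤ m) f
  simp only [esymm_zero_eq, mul_one, Nat.cast_zero, zero_add, one_mul] at this
  rw [← this]


lemma esymm_compl {m l : ℕ} (hl : l ≤ m) (f : Fin m → ℝ) (hf : ∀ i, f i ≠ 0) :
    esymm m (m - l) f = (∏ i, f i) * esymm m l (fun i => (f i)⁻¹) := by
  rw [esymm, esymm, Finset.mul_sum]
  refine Finset.sum_nbij' (fun s => sᶜ) (fun u => uᶜ) ?_ ?_ ?_ ?_ ?_
  · intro s hs
    rw [Finset.mem_powersetCard_univ] at hs ⊢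
    rw [Finset.card_compl, hs, Fintype.card_fin]
    omega
  · intro u hu
    rw [Finset.mem_powersetCard_univ] at hu ⊢
    rw [Finset.card_compl, hu, Fintype.card_fin]
  · intro s _; exact compl_compl s
  · intro u _; exact compl_compl u
  · intro s hs
    rw [Finset.mem_powersetCard_univ] at hs
    have h1 : (∏ i ∈ s, f i) * ∏ i ∈ sᶜ, f i = ∏ i, f i := Finset.prod_mul_prod_compl s f
    have h2 : ∏ i ∈ sᶜ, (f i)⁻¹ = (∏ i ∈ sᶜ, f i)⁻¹ := by
      rw [Finset.prod_inv_distrib]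
    have h3 : (∏ i ∈ sᶜ, f i) ≠ 0 := Finset.prod_ne_zero_iff.mpr fun i _ => hf i
    rw [h2]
    field_simp
    linarith [h1]

lemma exists_fun_multiset (c : ℕ) (M : Multiset ℝ) (h : Multiset.card M = c) :
    ∃ g : Fin c → ℝ, (univ : Finset (Fin c)).val.map g = M := by
  induction c generalizing M with
  | zero =>
    exact ⟨fun _ => 0, by simp [Multiset.card_eq_zero.mp h]⟩
  | succ c ih =>
    obtain ⟨a, ha⟩ := Multiset.exists_mem_of_ne_zero
      (by rw [← Multiset.card_pos, h]; omega : M ≠ 0)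
    obtain ⟨g', hg'⟩ := ih (M.erase a) (by simp [Multiset.card_erase_of_mem ha, h])
    refine ⟨Fin.cons a g', ?_⟩
    have huniv : (univ : Finset (Fin (c+1))).val
        = 0 ::ₘ ((univ : Finset (Fin c)).val.map Fin.succ) := by
      rw [Fin.univ_succ, Finset.cons_val, Finset.map_val]
      rfl
    rw [huniv, Multiset.map_cons, Multiset.map_map]
    have : (Fin.cons a g' : Fin (c+1) → ℝ) ∘ Fin.succ = g' := by
      funext x; simp
    rw [Fin.cons_zero, this, hg', Multiset.cons_erase ha]

lemma claimN_aux (Mb : ℕ) : ∀ (m j : ℕ) (f : Fin m → ℝ), m + j ≤ Mb → 1 ≤ j → j + 1 ≤ m →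
    0 < esymm m (j - 1) f → esymm m j f = 0 → esymm m (j + 1) f ≤ 0 := by
  induction Mb with
  | zero => intro m j f h h1 h2 _ _; omega
  | succ Mb ih =>
    intro m j f hM h1 hm hpos hzero
    by_cases hMle : m + j ≤ Mb
    · exact ih m j f hMle h1 hm hpos hzero
    rcases lt_or_eq_of_le hm with hlt | heq
    · -- j + 1 < m : derivative reduction
      have hm3 : 3 ≤ m := by omega
      set P := pfn f with hP
      set Q := derivative P with hQ
      have hQcoeff : ∀ l : ℕ, l ≤ m - 1 → Q.coeff (m - 1 - l) = ((m : ℝ) - l) * esymm m l f := by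
        intro l hl
        rw [hQ, coeff_derivative, hP, coeff_pfn (by omega : m - 1 - l + 1 ≤ m) f]
        have h2 : m - (m - 1 - l + 1) = l := by omega
        rw [h2]
        have h3 : ((m - 1 - l : ℕ) : ℝ) + 1 = (m : ℝ) - l := by
          have h4 : m - 1 - l = m - (l + 1) := by omega
          rw [h4, Nat.cast_sub (by omega)]
          push_cast; ring
        rw [h3, mul_comm]
      have hQlc : Q.coeff (m - 1) = (m : ℝ) := by
        have := hQcoeff 0 (by omega)
        simpa [esymm_zero_eq] using this
      have hQdeg : Q.natDegree = m - 1 := by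
        apply le_antisymm
        · have h5 := natDegree_derivative_le P
          rw [pfn_natDegree] at h5
          exact h5
        · apply le_natDegree_of_ne_zero
          rw [hQlc]
          exact_mod_cast (by positivity : (0:ℝ) < (m:ℝ)).ne'
      have hQroots : Multiset.card Q.roots = m - 1 := by
        have h1' := Polynomial.card_roots_le_derivative P
        rw [pfn_roots_card, ← hQ] at h1'
        have h2' := Polynomial.card_roots' Q
        omega
      have hQlc' : Q.leadingCoeff = (m : ℝ) := by
        rw [Polynomial.leadingCoeff, hQdeg, hQlc]
      obtain ⟨g, hg⟩ := exists_fun_multiset (m - 1) (Q.roots.map (fun x => -x))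
        (by simp [hQroots])
      have hesymm : ∀ l : ℕ, l ≤ m - 1 →
          (m : ℝ) * esymm (m - 1) l g = ((m : ℝ) - l) * esymm m l f := by
        intro l hl
        have hb : esymm (m - 1) l g = (Q.roots.map (fun x => -x)).esymm l := by
          rw [← hg, Finset.esymm_map_val]
          rfl
        have hneg : (Q.roots.map (fun x => -x)).esymm l = (-1)^l * Q.roots.esymm l :=
          Multiset.esymm_neg _ _
        have hcoeff := Polynomial.coeff_eq_esymm_roots_of_card
          (p := Q) (by rw [hQroots, hQdeg]) (k := m - 1 - l) (by omega)
        have hidx : Q.natDegree - (m - 1 - l) = l := by omega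
        rw [hidx, hQlc', hQcoeff l hl] at hcoeff
        rw [hb, hneg, hcoeff]
        ring
      have hmj : (0:ℝ) < (m:ℝ) - j := by
        have : (j:ℝ) + 1 < m := by exact_mod_cast hlt
        linarith
      have hmpos : (0:ℝ) < (m:ℝ) := by positivity
      have hg1 : 0 < esymm (m - 1) (j - 1) g := by
        have h6 := hesymm (j - 1) (by omega)
        have h7 : ((j - 1 : ℕ) : ℝ) = (j : ℝ) - 1 := by
          rw [Nat.cast_sub h1]; norm_num
        rw [h7] at h6
        nlinarith
      have hg2 : esymm (m - 1) j g = 0 := by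
        have h6 := hesymm j (by omega)
        rw [hzero, mul_zero] at h6
        nlinarith
      have ihres : esymm (m - 1) (j + 1) g ≤ 0 :=
        ih (m - 1) j g (by omega) h1 (by omega) hg1 hg2
      have h6 := hesymm (j + 1) (by omega)
      have h7 : (0:ℝ) < (m:ℝ) - (j + 1 : ℕ) := by
        have : ((j:ℝ) + 1) < m := by exact_mod_cast hlt
        push_cast
        linarith
      nlinarith
    · -- m = j + 1
      have hm2 : m = j + 1 := heq.symm
      rcases eq_or_lt_of_le h1 with hj1 | hj2
      · -- j = 1, m = 2
        have hj : j = 1 := hj1.symm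
        subst hj
        have hm' : m = 2 := by omega
        subst hm'
        have he1 : esymm 2 1 f = f 0 + f 1 := by
          rw [esymm_one_eq (by omega), Fin.sum_univ_two]
        have he2 : esymm 2 2 f = f 0 * f 1 := by
          rw [esymm_top, Fin.prod_univ_two]
        rw [he2]
        rw [he1] at hzero
        have hf1 : f 1 = -f 0 := by linarith
        rw [hf1]
        nlinarith [sq_nonneg (f 0)]
      · -- j ≥ 2
        by_contra hcon
        push_neg at hcon
        have hprod : 0 < ∏ i, f i := by
          have hcon' : 0 < esymm m m f := by rwa [heq] at hcon
          rwa [esymm_top] at hcon'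
        have hne : ∀ i, f i ≠ 0 := by
          intro i hi
          rw [Finset.prod_eq_zero (mem_univ i) hi] at hprod
          exact lt_irrefl 0 hprod
        have hc1 : esymm m 1 (fun i => (f i)⁻¹) = 0 := by
          have := esymm_compl (by omega : 1 ≤ m) f hne
          rw [show m - 1 = j by omega, hzero] at this
          have hp := hprod.ne'
          rcases mul_eq_zero.mp this.symm with h' | h'
          · exact absurd h' hp
          · exact h'
        have hc2 : 0 < esymm m 2 (fun i => (f i)⁻¹) := by
          have := esymm_compl (by omega : 2 ≤ m) f hne
          rw [show m - 2 = j - 1 by omega] at this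
          nlinarith
        have ihres := ih m 1 (fun i => (f i)⁻¹) (by omega) le_rfl (by omega)
          (by rw [esymm_zero_eq]; norm_num) hc1
        linarith


lemma esymm_pos_of_pos {m K : ℕ} (v : Fin m → ℝ) (hv : ∀ x, 0 ≤ v x)
    (s0 : Finset (Fin m)) (hs0 : s0.card = K) (hpos : ∀ x ∈ s0, 0 < v x) :
    0 < esymm m K v := by
  rw [esymm]
  apply Finset.sum_pos'
  · intro s _
    exact Finset.prod_nonneg fun x _ => hv x
  · exact ⟨s0, Finset.mem_powersetCard_univ.mpr hs0, Finset.prod_pos hpos⟩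

lemma pfn_shift {m : ℕ} (f : Fin m → ℝ) (t : ℝ) :
    pfn (fun x => f x + t) = (pfn f).comp (X + C t) := by
  rw [pfn, pfn, Polynomial.prod_comp]
  exact Finset.prod_congr rfl fun i _ => by
    rw [add_comp, X_comp, C_comp, map_add]
    ring

lemma qfn_shift {m : ℕ} (f : Fin m → ℝ) (i : Fin m) (t : ℝ) :
    qfn (fun x => f x + t) i = (qfn f i).comp (X + C t) := by
  rw [qfn, qfn, Polynomial.prod_comp]
  exact Finset.prod_congr rfl fun x _ => by
    rw [add_comp, X_comp, C_comp, map_add]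
    ring

/-- σ_j(f + t) = eval of the (n-j)-th Hasse derivative at t. -/
lemma esymm_shift_eval {m j : ℕ} (hj : j ≤ m) (f : Fin m → ℝ) (t : ℝ) :
    esymm m j (fun x => f x + t) = ((hasseDeriv (m - j) (pfn f)).eval t) := by
  rw [esymm_eq_coeff hj, pfn_shift, ← taylor_apply, taylor_coeff]

/-- Adding t ≥ 0 preserves the Garding cone condition. -/
lemma shift_gamma {n K : ℕ} (hK : K ≤ n) (f : Fin n → ℝ)
    (hf : ∀ j, 1 ≤ j → j ≤ K → 0 < esymm n j f) (t : ℝ) (ht : 0 ≤ t) :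
    ∀ j, 1 ≤ j → j ≤ K → 0 < esymm n j (fun x => f x + t) := by
  intro j hj1 hjK
  have hjn : j ≤ n := le_trans hjK hK
  rw [esymm_shift_eval hjn, eval_eq_sum_range]
  apply Finset.sum_pos'
  · intro l _
    rw [hasseDeriv_coeff]
    rcases le_or_gt (l + (n - j)) n with hs | hs
    · have hl : l ≤ j := by omega
      rw [coeff_pfn hs]
      have : n - (l + (n - j)) = j - l := by omega
      rw [this]
      have he : 0 ≤ esymm n (j - l) f := by
        rcases Nat.eq_zero_or_pos (j - l) with h0 | h0
        · rw [h0, esymm_zero_eq]; norm_num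
        · exact le_of_lt (hf _ h0 (by omega))
      positivity
    · rw [Polynomial.coeff_eq_zero_of_natDegree_lt (by rw [pfn_natDegree]; omega)]
      simp
  · refine ⟨0, Finset.mem_range.mpr (by omega), ?_⟩
    rw [hasseDeriv_coeff]
    simp only [zero_add, Nat.choose_self, Nat.cast_one, one_mul, pow_zero, mul_one]
    rw [coeff_pfn (Nat.sub_le n j)]
    have : n - (n - j) = j := by omega
    rw [this]
    exact hf j hj1 hjK

lemma esymm_update_shift {n K : ℕ} (hK : K + 1 ≤ n) (f : Fin n → ℝ) (i : Fin n) (t : ℝ) :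
    esymm n K (Function.update (fun x => f x + t) i 0)
      = (hasseDeriv (n - K - 1) (qfn f i)).eval t := by
  obtain ⟨d, hd⟩ : ∃ d, n - K = d + 1 := ⟨n - K - 1, by omega⟩
  have hd2 : n - K - 1 = d := by omega
  rw [esymm_eq_coeff (by omega), pfn_update, hd2, hd, coeff_X_mul, qfn_shift,
    ← taylor_apply, taylor_coeff]

lemma lemL : ∀ (K : ℕ) {n : ℕ}, K ≤ n → ∀ (f : Fin n → ℝ),
    (∀ j, 1 ≤ j → j ≤ K → 0 < esymm n j f) → ∀ (i : Fin n) (j : ℕ), 1 ≤ j → j ≤ K - 1 →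
    0 < esymm n j (Function.update f i 0) := by
  intro K
  induction K with
  | zero => intro n _ f _ i j hj1 hj2; omega
  | succ K IH =>
    intro n hKn f hf i j hj1 hj2
    rcases lt_or_eq_of_le (by omega : j ≤ K) with hlt | heq
    · exact IH (by omega) f (fun l hl1 hl2 => hf l hl1 (by omega)) i j hj1 (by omega)
    rw [heq]
    rw [heq] at hj1
    clear hj2 heq
    -- j = K, 1 ≤ K, K + 1 ≤ n
    set g : ℝ → ℝ := fun t => (hasseDeriv (n - K - 1) (qfn f i)).eval t with hg
    have hcont : Continuous g := by
      apply Polynomial.continuous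
    have hgrep : ∀ t : ℝ, g t = esymm n K (Function.update (fun x => f x + t) i 0) :=
      fun t => (esymm_update_shift hKn f i t).symm
    have hg0 : g 0 = esymm n K (Function.update f i 0) := by
      rw [hgrep 0]
      congr 1
      · funext x; ring
    by_contra hcon
    push_neg at hcon
    rw [← hg0] at hcon
    set T : ℝ := 1 + ∑ x, |f x| with hT
    have hTpos : ∀ t : ℝ, T ≤ t → 0 < g t := by
      intro t ht
      rw [hgrep t]
      have hvpos : ∀ x : Fin n, 0 < f x + t := by
        intro x
        have h1 : |f x| ≤ ∑ y, |f y| :=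
          Finset.single_le_sum (fun y _ => abs_nonneg (f y)) (mem_univ x)
        have h2 : -f x ≤ |f x| := neg_le_abs (f x)
        linarith
      obtain ⟨s0, hs0sub, hs0card⟩ := Finset.exists_subset_card_eq
        (by rw [Finset.card_erase_of_mem (mem_univ i), card_univ, Fintype.card_fin]; omega :
          K ≤ (univ.erase i).card)
      apply esymm_pos_of_pos _ ?_ s0 hs0card
      · intro x hx
        have hxi : x ≠ i := (Finset.mem_erase.1 (hs0sub hx)).1
        rw [Function.update_of_ne hxi]
        exact hvpos x
      · intro x
        rcases eq_or_ne x i with rfl | hxi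
        · rw [Function.update_self]
        · rw [Function.update_of_ne hxi]
          exact (hvpos x).le
    set S : Set ℝ := {t : ℝ | 0 ≤ t ∧ g t ≤ 0} with hS
    have hS0 : (0:ℝ) ∈ S := ⟨le_refl 0, hcon⟩
    have hSb : BddAbove S := by
      refine ⟨T, fun t ht => ?_⟩
      by_contra htT
      push_neg at htT
      exact absurd ht.2 (not_le.mpr (hTpos t htT.le))
    have hSclosed : IsClosed S := by
      have : S = Set.Ici (0:ℝ) ∩ g ⁻¹' Set.Iic 0 := by
        ext t; simp [hS, Set.mem_Ici, Set.mem_Iic, and_comm]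
      rw [this]
      exact isClosed_Ici.inter (isClosed_Iic.preimage hcont)
    set ts : ℝ := sSup S with hts
    have hmem : ts ∈ S := hSclosed.csSup_mem ⟨0, hS0⟩ hSb
    have hub : ∀ t : ℝ, ts < t → 0 ≤ g t := by
      intro t htst
      by_contra hneg
      push_neg at hneg
      have htS : t ∈ S := ⟨le_trans hmem.1 htst.le, hneg.le⟩
      exact absurd (le_csSup hSb htS) (not_le.mpr htst)
    have hge : 0 ≤ g ts := by
      have htend : Filter.Tendsto g (nhdsWithin ts (Set.Ioi ts)) (nhds (g ts)) :=
        (hcont.tendsto ts).mono_left nhdsWithin_le_nhds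
      exact ge_of_tendsto htend (Filter.eventually_iff_exists_mem.mpr
        ⟨Set.Ioi ts, self_mem_nhdsWithin, fun t ht => hub t ht⟩)
    have hgz : g ts = 0 := le_antisymm hmem.2 hge
    -- contradiction via claimN
    set ν : Fin n → ℝ := fun x => f x + ts with hν
    have hνΓ : ∀ j, 1 ≤ j → j ≤ K + 1 → 0 < esymm n j ν :=
      shift_gamma hKn f hf ts hmem.1
    have h_km1 : 0 < esymm n (K - 1) (Function.update ν i 0) := by
      rcases lt_or_ge K 2 with hK2 | hK2
      · have : K - 1 = 0 := by omega
        rw [this, esymm_zero_eq]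
        norm_num
      · exact IH (by omega) ν (fun l hl1 hl2 => hνΓ l hl1 (by omega)) i (K - 1)
          (by omega) (by omega)
    have h_k : esymm n K (Function.update ν i 0) = 0 := by
      rw [hν, ← hgrep ts]
      exact hgz
    have h_k1 : 0 < esymm n (K + 1) (Function.update ν i 0) := by
      have hrec := esymm_rec (by omega : 1 ≤ K + 1) hKn ν i
      simp only [Nat.add_sub_cancel] at hrec
      rw [h_k, mul_zero, add_zero] at hrec
      rw [← hrec]
      exact hνΓ (K + 1) (by omega) le_rfl
    have := claimN_aux (n + K) n K (Function.update ν i 0) le_rfl hj1 hKn h_km1 h_k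
    linarith

end Aux

/-- Case 4 inequality: if σ_{k-1}(λ|1) ≤ δ(−λ_n)σ_{k-2}(λ|1,n) then
k σ_k(λ|1) ≤ −nδ λ_n λ_2 σ_{k-2}(λ|1,n) − λ_n² σ_{k-2}(λ|1,n). -/
theorem case4_inequality (n k : ℕ) (hn : 2 ≤ n) (hk : 2 ≤ k) (hkn : k ≤ n)
    (lam : Fin n → ℝ) (hlam : lam ∈ GammaCone n k) (hsort : Antitone lam)
    (hneg : lam ⟨n - 1, by omega⟩ < 0) (δ : ℝ) (hδ : 0 < δ)
    (hyp : esymm n (k - 1) (Function.update lam (⟨0, by omega⟩ : Fin n) 0) ≤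
      δ * (-(lam ⟨n - 1, by omega⟩)) *
        esymm n (k - 2)
          (Function.update (Function.update lam (⟨0, by omega⟩ : Fin n) 0)
            (⟨n - 1, by omega⟩ : Fin n) 0)) :
    (k : ℝ) * esymm n k (Function.update lam (⟨0, by omega⟩ : Fin n) 0) ≤
      -(n : ℝ) * δ * lam ⟨n - 1, by omega⟩ * lam ⟨1, by omega⟩ *
          esymm n (k - 2)
            (Function.update (Function.update lam (⟨0, by omega⟩ : Fin n) 0)
              (⟨n - 1, by omega⟩ : Fin n) 0) -
        (lam ⟨n - 1, by omega⟩) ^ 2 *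
          esymm n (k - 2)
            (Function.update (Function.update lam (⟨0, by omega⟩ : Fin n) 0)
              (⟨n - 1, by omega⟩ : Fin n) 0) := by
  have hΓ : ∀ j, 1 ≤ j → j ≤ k → 0 < esymm n j lam := hlam
  set i0 : Fin n := ⟨0, by omega⟩ with hi0
  set iN : Fin n := ⟨n - 1, by omega⟩ with hiN
  set i1 : Fin n := ⟨1, by omega⟩ with hi1
  set μ : Fin n → ℝ := Function.update lam i0 0 with hμ
  set ν : Fin n → ℝ := Function.update μ iN 0 with hν
  set E : ℝ := esymm n (k - 2) ν with hE
  set a : ℝ := lam iN with ha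
  set b : ℝ := lam i1 with hb
  -- positivity facts from lemma L
  have hL1 : ∀ j, 1 ≤ j → j ≤ k - 1 → 0 < esymm n j μ :=
    fun j h1 h2 => lemL k hkn lam hΓ i0 j h1 h2
  have hL2 : ∀ (i : Fin n) j, 1 ≤ j → j ≤ k - 2 → 0 < esymm n j (Function.update μ i 0) :=
    fun i j h1 h2 => lemL (k - 1) (by omega) μ (fun l a' b' => hL1 l a' b') i j h1 (by omega)
  have hE0 : ∀ i : Fin n, 0 ≤ esymm n (k - 2) (Function.update μ i 0) := by
    intro i
    rcases eq_or_lt_of_le hk with h2 | h3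
    · rw [show k - 2 = 0 by omega, esymm_zero_eq]; norm_num
    · exact (hL2 i (k - 2) (by omega) le_rfl).le
  have hEnn : 0 ≤ E := hE0 iN
  have hSkm1 : 0 < esymm n (k - 1) μ := hL1 (k - 1) (by omega) le_rfl
  -- main identity
  have hkey : (k : ℝ) * esymm n k μ = (∑ i, μ i) * esymm n (k - 1) μ
      - ∑ i, (μ i) ^ 2 * esymm n (k - 2) (Function.update μ i 0) := by
    have hsum := sum_mul_esymm_update (j := k - 1) (by omega) μ
    have hc : ((k - 1 : ℕ) : ℝ) + 1 = (k : ℝ) := by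
      rw [Nat.cast_sub (by omega)]; push_cast; ring
    have hidx : k - 1 + 1 = k := by omega
    rw [hidx, hc] at hsum
    rw [← hsum, Finset.sum_mul, ← Finset.sum_sub_distrib]
    apply Finset.sum_congr rfl
    intro i _
    have hrec := esymm_rec (by omega : 1 ≤ k - 1) (by omega : k - 1 ≤ n) μ i
    rw [show k - 1 - 1 = k - 2 by omega] at hrec
    linear_combination (-(μ i)) * hrec
  -- Σ μ = Σ_{i ≠ 0} lam i
  have hSum1 : ∑ i, μ i = ∑ i ∈ univ.erase i0, lam i := by
    rw [hμ, Finset.sum_update_of_mem (mem_univ i0), zero_add, Finset.sdiff_singleton_eq_erase]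
  have hle_b : ∀ i ∈ univ.erase i0, lam i ≤ b := by
    intro i hi
    have hi' : i ≠ i0 := (Finset.mem_erase.1 hi).1
    have : i1 ≤ i := by
      rw [hi1, Fin.le_def]
      simp only
      have : i.val ≠ 0 := fun h => hi' (by rw [hi0]; exact Fin.ext h)
      omega
    exact hsort this
  have hcard : (univ.erase i0).card = n - 1 := by
    rw [Finset.card_erase_of_mem (mem_univ i0), card_univ, Fintype.card_fin]
  have hSum_le : ∑ i, μ i ≤ ((n : ℝ) - 1) * b := by
    rw [hSum1]
    have := Finset.sum_le_card_nsmul (univ.erase i0) lam b hle_b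
    rw [hcard, nsmul_eq_mul] at this
    have hc : ((n - 1 : ℕ) : ℝ) = (n : ℝ) - 1 := by
      rw [Nat.cast_sub (by omega)]; push_cast; ring
    rwa [hc] at this
  have hb0 : 0 ≤ b := by
    have h1 : 0 < esymm n 1 μ := hL1 1 (by omega) (by omega)
    rw [esymm_one_eq (by omega)] at h1
    by_contra hbneg
    push_neg at hbneg
    have hn1 : (0:ℝ) < (n : ℝ) - 1 := by
      have : (2:ℝ) ≤ (n:ℝ) := by exact_mod_cast hn
      linarith
    nlinarith
  -- step: (Σ μ) Skm1 ≤ n b δ (-a) E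
  have c1 : (∑ i, μ i) * esymm n (k - 1) μ ≤ (((n : ℝ) - 1) * b) * esymm n (k - 1) μ :=
    mul_le_mul_of_nonneg_right hSum_le hSkm1.le
  have c2 : (((n : ℝ) - 1) * b) * esymm n (k - 1) μ ≤ (((n : ℝ) - 1) * b) * (δ * (-a) * E) := by
    apply mul_le_mul_of_nonneg_left hyp
    have : (0:ℝ) ≤ (n : ℝ) - 1 := by
      have : (2:ℝ) ≤ (n:ℝ) := by exact_mod_cast hn
      linarith
    positivity
  have c3 : (((n : ℝ) - 1) * b) * (δ * (-a) * E) ≤ ((n : ℝ) * b) * (δ * (-a) * E) := by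
    have hfac : 0 ≤ b * (δ * (-a) * E) := by
      have hna : 0 ≤ -a := by linarith
      positivity
    nlinarith
  -- step: Σ μᵢ² σ_{k-2}(μ|i) ≥ a² E
  have hμN : μ iN = a := by
    rw [hμ, ha, Function.update_of_ne]
    rw [hiN, hi0]
    intro h
    have := Fin.mk.inj_iff.mp h
    omega
  have c4 : (μ iN) ^ 2 * esymm n (k - 2) (Function.update μ iN 0)
      ≤ ∑ i, (μ i) ^ 2 * esymm n (k - 2) (Function.update μ i 0) :=
    Finset.single_le_sum (f := fun i => (μ i) ^ 2 * esymm n (k - 2) (Function.update μ i 0))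
      (fun i _ => mul_nonneg (sq_nonneg _) (hE0 i)) (mem_univ iN)
  have c4' : a ^ 2 * E ≤ ∑ i, (μ i) ^ 2 * esymm n (k - 2) (Function.update μ i 0) := by
    rw [← hμN]
    exact c4
  have hfinal : (k : ℝ) * esymm n k μ ≤ ((n : ℝ) * b) * (δ * (-a) * E) - a ^ 2 * E := by
    rw [hkey]
    have := le_trans c1 (le_trans c2 c3)
    linarith
  have hre : ((n : ℝ) * b) * (δ * (-a) * E) - a ^ 2 * E
      = -(n : ℝ) * δ * a * b * E - a ^ 2 * E := by ring
  rw [hre] at hfinal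
  exact hfinal
end
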